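/- arXiv:1005.2849 — 6 statements merged into one kernel-verified Lean document; each statement's English description precedes it below -/
import Mathlib

section
/- Let U : G → U(H) be a unitary representation of a group G on a Hilbert space H, and let H₀ be the closed subspace of H spanned by all eigenvectors of U. Then every element of H₀ has a totally bounded orbit under U, i.e. for each x ∈ H₀ the set {U_g x : g ∈ G} is totally bounded in H. -/
/-!
An eigenvector `y` of a unitary representation has orbit `{χ g • y}` with `|χ g| = 1`, the image of
a compact set. The vectors with totally bounded orbit form a submodule, since `s + t` is totally
bounded when `s` and `t` are, and this submodule is closed because the representation acts by
isometries, an equicontinuous family. Hence it contains the closed span of the eigenvectors.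
-/

open Set Pointwise

@[to_additive]
protected lemma TotallyBounded.mul {α : Type*} [CommGroup α] [UniformSpace α] [IsUniformGroup α]
    {s t : Set α} (hs : TotallyBounded s) (ht : TotallyBounded t) : TotallyBounded (s * t) := by
  simp only [totallyBounded_iff_subset_finite_iUnion_nhds_one, iUnion_smul_set, smul_eq_mul] at *
  intro U hU
  obtain ⟨V, hV, hVU⟩ := exists_nhds_one_split hU
  obtain ⟨a, ha, hsa⟩ := hs V hV
  obtain ⟨b, hb, htb⟩ := ht V hV
  refine ⟨a * b, ha.mul hb, ?_⟩
  calc s * t ⊆ a * V * (b * V) := mul_subset_mul hsa htb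
    _ = a * b * (V * V) := mul_mul_mul_comm _ _ _ _
    _ ⊆ a * b * U := mul_subset_mul_left fun _ ⟨v, hv, w, hw, hvw⟩ => hvw ▸ hVU v hv w hw

theorem isClosed_setOf_totallyBounded_range {ι α β : Type*} [UniformSpace α] [UniformSpace β]
    {f : ι → α → β} (hf : UniformEquicontinuous f) :
    IsClosed {x | TotallyBounded (range fun i => f i x)} := by
  refine isClosed_of_closure_subset fun x hx d hd => ?_
  obtain ⟨V, hV, hVd⟩ := comp_mem_uniformity_sets hd
  obtain ⟨y, hxy, hy⟩ := mem_closure_iff_nhds.mp hx _ (mem_nhds_left x (hf V hV))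
  obtain ⟨t, ht, hyt⟩ := hy V hV
  refine ⟨t, ht, ?_⟩
  rintro _ ⟨i, rfl⟩
  obtain ⟨z, hz, hyz⟩ := mem_iUnion₂.mp (hyt ⟨i, rfl⟩)
  exact mem_iUnion₂.mpr ⟨z, hz, hVd (SetRel.prodMk_mem_comp (hxy i) hyz)⟩

section TotallyBoundedOrbits

variable {ι R E : Type*} [Semiring R] [AddCommGroup E] [Module R E] [UniformSpace E]
  [IsUniformAddGroup E] [UniformContinuousConstSMul R E]

def totallyBoundedOrbits (T : ι → E →ₗ[R] E) : Submodule R E where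
  carrier := {x | TotallyBounded (range fun i => T i x)}
  zero_mem' := (totallyBounded_singleton 0).subset <| range_subset_iff.2 fun i => map_zero (T i)
  add_mem' {x y} hx hy := (hx.add hy).subset <|
    range_subset_iff.2 fun i => by
      simpa only [map_add] using add_mem_add (mem_range_self i) (mem_range_self i)
  smul_mem' c x hx := (hx.image (uniformContinuous_const_smul c)).subset <|
    range_subset_iff.2 fun i => by
      simpa only [map_smul] using mem_image_of_mem _ (mem_range_self i)

theorem isClosed_totallyBoundedOrbits {T : ι → E →ₗ[R] E}
    (hT : UniformEquicontinuous fun i => ⇑(T i)) :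
    IsClosed (totallyBoundedOrbits T : Set E) :=
  isClosed_setOf_totallyBounded_range hT

end TotallyBoundedOrbits

section Eigenvector

variable {ι 𝕜 E : Type*} [NormedField 𝕜] [NormedAddCommGroup E] [NormedSpace 𝕜 E]

theorem LinearIsometry.norm_eq_one_of_apply_eq_smul (T : E →ₗᵢ[𝕜] E) {y : E} (hy : y ≠ 0)
    {c : 𝕜} (hTy : T y = c • y) : ‖c‖ = 1 := by
  have h := T.norm_map y
  rw [hTy, norm_smul] at h
  exact (mul_eq_right₀ (norm_ne_zero_iff.mpr hy)).mp h

theorem totallyBounded_range_smul [ProperSpace 𝕜] {c : ι → 𝕜} (hc : Bornology.IsBounded (range c))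
    (y : E) : TotallyBounded (range fun i => c i • y) :=
  (hc.isCompact_closure.image (continuous_id.smul continuous_const)).totallyBounded.subset <|
    range_subset_iff.2 fun i => mem_image_of_mem (· • y) (subset_closure (mem_range_self i))

theorem totallyBounded_range_of_apply_eq_smul [ProperSpace 𝕜] (T : ι → E →ₗᵢ[𝕜] E) {y : E}
    {χ : ι → 𝕜} (hy : ∀ i, T i y = χ i • y) : TotallyBounded (range fun i => T i y) := by
  rcases eq_or_ne y 0 with rfl | hy0
  · exact (totallyBounded_singleton 0).subset <| range_subset_iff.2 fun i => map_zero (T i)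
  have hχ : range χ ⊆ Metric.sphere 0 1 := range_subset_iff.2 fun i => by
    simpa using (T i).norm_eq_one_of_apply_eq_smul hy0 (hy i)
  simpa only [hy] using totallyBounded_range_smul (Metric.isBounded_sphere.subset hχ) y

end Eigenvector

theorem totallyBounded_orbit_of_mem_closedSpan_eigenvectors
    {G : Type*} [Group G] {H : Type*} [NormedAddCommGroup H] [InnerProductSpace ℂ H]
    (U : G →* (H ≃ₗᵢ[ℂ] H)) (x : H)
    (hx : x ∈ (Submodule.span ℂ
        {y : H | y ≠ 0 ∧ ∃ χ : G → ℂ, ∀ g, U g y = χ g • y}).topologicalClosure) :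
    TotallyBounded (Set.range fun g => U g x) := by
  let T : G → H →ₗᵢ[ℂ] H := fun g => (U g).toLinearIsometry
  have hclosed : IsClosed (totallyBoundedOrbits (fun g => (T g).toLinearMap) : Set H) :=
    isClosed_totallyBoundedOrbits (LipschitzWith.uniformEquicontinuous _ 1 fun g => (T g).lipschitz)
  have hspan : Submodule.span ℂ {y : H | y ≠ 0 ∧ ∃ χ : G → ℂ, ∀ g, U g y = χ g • y} ≤
      totallyBoundedOrbits fun g => (T g).toLinearMap :=
    Submodule.span_le.2 fun _ ⟨_, _, hχ⟩ => totallyBounded_range_of_apply_eq_smul T hχ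
  exact Submodule.topologicalClosure_minimal _ hspan hclosed hx
end

section
/- Let Γ be a compact Hausdorff topological space which is also a group such that multiplication Γ × Γ → Γ is (jointly) continuous. Then inversion is continuous, i.e. Γ is a topological group. -/
/-!
The shear `(x, y) ↦ (x, x * y)` of `Γ × Γ` is a continuous bijection from a compact space onto a
Hausdorff space, hence a homeomorphism. Its inverse `(x, y) ↦ (x, x⁻¹ * y)` is therefore
continuous, and evaluating it at `y = 1` gives continuity of inversion.
-/

section Shear

variable {Γ : Type*} [Group Γ] [TopologicalSpace Γ] [ContinuousMul Γ]

theorem continuous_prodShear_mulLeft :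
    Continuous (Equiv.prodShear (Equiv.refl Γ) Equiv.mulLeft) :=
  continuous_fst.prodMk continuous_mul

theorem continuous_inv_mul_of_compactSpace [CompactSpace Γ] [T2Space Γ] :
    Continuous fun p : Γ × Γ => p.1⁻¹ * p.2 :=
  continuous_snd.comp continuous_prodShear_mulLeft.continuous_symm_of_equiv_compact_to_t2

end Shear

theorem topologicalGroup_of_compact_continuousMul
    {Γ : Type*} [Group Γ] [TopologicalSpace Γ] [CompactSpace Γ] [T2Space Γ]
    [ContinuousMul Γ] : IsTopologicalGroup Γ := by
  refine { continuous_inv := ?_ }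
  exact (continuous_inv_mul_of_compactSpace.comp (continuous_id.prodMk continuous_const)).congr
    fun x : Γ => mul_one x⁻¹
end

section
/- Let G be a group, H a Hilbert space, U : G → U(H) a unitary representation, and P the orthogonal projection onto the fixed point space H^U = {x : U_g x = x for all g}. Then P lies in the strong closure of the convex hull of {U_g : g ∈ G}. -/
/-! The closed convex hull `C` of an orbit `{U g x}` is mapped into itself by every `U g`; as
`U g` preserves norms, it fixes the unique point of minimal norm of `C`. That point lies in `H^U`,
and since `P` is constant on `C` it is `P x`. Hence `P x` is approximated by `T x` for some convex
combination `T` of the `U g`. Finitely many vectors are handled one at a time: the convex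
combinations form a semigroup of contractions fixing `H^U` pointwise and satisfying `P T = P`, so
composing with a later approximation does not spoil the earlier ones. -/

open Set

theorem mul_mem_convexHull {𝕜 A : Type*} [Semiring 𝕜] [PartialOrder 𝕜]
    [NonUnitalNonAssocSemiring A] [Module 𝕜 A] [SMulCommClass 𝕜 A A] [IsScalarTower 𝕜 A A]
    {S : Set A} (hS : ∀ a ∈ S, ∀ b ∈ S, a * b ∈ S) {a b : A} (ha : a ∈ convexHull 𝕜 S)
    (hb : b ∈ convexHull 𝕜 S) : a * b ∈ convexHull 𝕜 S := by
  have hright : ∀ c ∈ S, ∀ a ∈ convexHull 𝕜 S, a * c ∈ convexHull 𝕜 S := fun c hc =>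
    convexHull_min (fun a ha => subset_convexHull 𝕜 S (hS a ha c hc))
      ((convex_convexHull 𝕜 S).linear_preimage (LinearMap.mulRight 𝕜 c))
  exact convexHull_min (fun c hc => hright c hc a ha)
    ((convex_convexHull 𝕜 S).linear_preimage (LinearMap.mulLeft 𝕜 a)) hb

theorem Convex.exists_mem_forall_norm_le_imp_eq {F : Type*} [NormedAddCommGroup F]
    [InnerProductSpace ℝ F] {C : Set F} (hconv : Convex ℝ C) (hne : C.Nonempty)
    (hcomplete : IsComplete C) : ∃ v ∈ C, ∀ w ∈ C, ‖w‖ ≤ ‖v‖ → w = v := by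
  obtain ⟨v, hvC, hv⟩ := exists_norm_eq_iInf_of_complete_convex hne hcomplete hconv 0
  refine ⟨v, hvC, fun w hwC hwv => ?_⟩
  have hvar : ‖v‖ ^ 2 ≤ inner ℝ v w := by
    have := (norm_eq_iInf_iff_real_inner_le_zero hconv hvC).1 hv w hwC
    rw [zero_sub, inner_neg_left, inner_sub_right, real_inner_self_eq_norm_sq] at this
    linarith
  have : ‖w - v‖ ^ 2 ≤ 0 := by
    rw [norm_sub_sq_real, real_inner_comm]
    nlinarith [norm_nonneg w, norm_nonneg v]
  simpa [sub_eq_zero] using this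

theorem Convex.exists_forall_isFixedPt_of_norm_map {F : Type*} [NormedAddCommGroup F]
    [InnerProductSpace ℝ F] {C : Set F} (hconv : Convex ℝ C) (hne : C.Nonempty)
    (hcomplete : IsComplete C) {ι : Type*} {f : ι → F → F} (hmaps : ∀ i, MapsTo (f i) C C)
    (hnorm : ∀ i x, ‖f i x‖ = ‖x‖) : ∃ v ∈ C, ∀ i, Function.IsFixedPt (f i) v := by
  obtain ⟨v, hvC, hv⟩ := hconv.exists_mem_forall_norm_le_imp_eq hne hcomplete
  exact ⟨v, hvC, fun i => hv _ (hmaps i hvC) (hnorm i v).le⟩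

section UnitaryRepresentation

variable {G : Type*} [Group G] {H : Type*} [NormedAddCommGroup H] [InnerProductSpace ℂ H]
  (U : G →* (H ≃ₗᵢ[ℂ] H))

def unitaryConvexHull : Set (H →L[ℂ] H) :=
  convexHull ℝ (range fun g => (U g).toLinearIsometry.toContinuousLinearMap)

theorem one_mem_unitaryConvexHull : (1 : H →L[ℂ] H) ∈ unitaryConvexHull U :=
  subset_convexHull ℝ _ ⟨1, by ext; simp⟩

variable {U}

theorem mul_mem_unitaryConvexHull {T T' : H →L[ℂ] H} (hT : T ∈ unitaryConvexHull U)
    (hT' : T' ∈ unitaryConvexHull U) : T * T' ∈ unitaryConvexHull U := by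
  refine mul_mem_convexHull (S := range _) ?_ hT hT'
  rintro _ ⟨g, rfl⟩ _ ⟨h, rfl⟩
  exact ⟨g * h, by ext; simp⟩

theorem image_apply_unitaryConvexHull (x : H) :
    (fun T : H →L[ℂ] H => T x) '' unitaryConvexHull U = convexHull ℝ (range fun g => U g x) := by
  have := ((ContinuousLinearMap.apply ℂ H x).toLinearMap.restrictScalars ℝ).image_convexHull
    (range fun g => (U g).toLinearIsometry.toContinuousLinearMap)
  rwa [← range_comp] at this

theorem apply_mem_convexHull_orbit {T : H →L[ℂ] H} (hT : T ∈ unitaryConvexHull U) (x : H) :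
    T x ∈ convexHull ℝ (range fun g => U g x) :=
  image_apply_unitaryConvexHull (U := U) x ▸ mem_image_of_mem _ hT

theorem apply_eq_self_of_forall_eq {T : H →L[ℂ] H} (hT : T ∈ unitaryConvexHull U) {z : H}
    (hz : ∀ g, U g z = z) : T z = z := by
  simpa [hz] using apply_mem_convexHull_orbit hT z

theorem norm_apply_le {T : H →L[ℂ] H} (hT : T ∈ unitaryConvexHull U) (x : H) : ‖T x‖ ≤ ‖x‖ := by
  have hball : range (fun g => U g x) ⊆ Metric.closedBall 0 ‖x‖ := by
    rintro _ ⟨g, rfl⟩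
    simp
  simpa using convexHull_min hball (convex_closedBall 0 ‖x‖) (apply_mem_convexHull_orbit hT x)

theorem exists_forall_eq_mem_closure_convexHull_orbit [CompleteSpace H] (x : H) :
    ∃ v ∈ closure (convexHull ℝ (range fun g => U g x)), ∀ g, U g v = v := by
  let : InnerProductSpace ℝ H := InnerProductSpace.rclikeToReal ℂ H
  have hmaps : ∀ g, MapsTo (U g) (convexHull ℝ (range fun h => U h x))
      (convexHull ℝ (range fun h => U h x)) := by
    rw [← image_apply_unitaryConvexHull]
    rintro g _ ⟨T, hT, rfl⟩
    exact ⟨_, mul_mem_unitaryConvexHull (subset_convexHull ℝ _ ⟨g, rfl⟩) hT, rfl⟩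
  have hx : x ∈ closure (convexHull ℝ (range fun h => U h x)) :=
    subset_closure (subset_convexHull ℝ _ ⟨1, by simp⟩)
  exact Convex.exists_forall_isFixedPt_of_norm_map (convex_convexHull ℝ _).closure ⟨x, hx⟩
    isClosed_closure.isComplete (fun g => (hmaps g).closure (U g).continuous)
    fun g => (U g).norm_map

variable {K : Submodule ℂ H} [K.HasOrthogonalProjection]

theorem starProjection_map_eq (hK : (K : Set H) = {x | ∀ g, U g x = x}) (g : G) (y : H) :
    K.starProjection (U g y) = K.starProjection y := by
  have hfix : ∀ z ∈ K, U g z = z := fun z hz => (Set.ext_iff.1 hK z).1 hz g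
  refine K.eq_starProjection_of_mem_orthogonal (K.starProjection_apply_mem y) ?_
  rw [← hfix _ (K.starProjection_apply_mem y), ← map_sub, Submodule.mem_orthogonal]
  intro u hu
  rw [← hfix u hu, LinearIsometryEquiv.inner_map_map]
  exact K.inner_right_of_mem_orthogonal hu (K.sub_starProjection_mem_orthogonal y)

theorem starProjection_eq_of_mem_closure_convexHull_orbit
    (hK : (K : Set H) = {x | ∀ g, U g x = x}) {x c : H}
    (hc : c ∈ closure (convexHull ℝ (range fun g => U g x))) :
    K.starProjection c = K.starProjection x := by
  have hclosed : IsClosed {c : H | K.starProjection c = K.starProjection x} :=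
    isClosed_eq K.starProjection.continuous continuous_const
  have hconv : Convex ℝ {c : H | K.starProjection c = K.starProjection x} :=
    (convex_singleton _).linear_preimage (K.starProjection.toLinearMap.restrictScalars ℝ)
  refine closure_minimal (convexHull_min ?_ hconv) hclosed hc
  rintro _ ⟨g, rfl⟩
  exact starProjection_map_eq hK g x

theorem starProjection_apply_of_mem_unitaryConvexHull
    (hK : (K : Set H) = {x | ∀ g, U g x = x}) {T : H →L[ℂ] H} (hT : T ∈ unitaryConvexHull U)
    (x : H) :
    K.starProjection (T x) = K.starProjection x :=
  starProjection_eq_of_mem_closure_convexHull_orbit hK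
    (subset_closure (apply_mem_convexHull_orbit hT x))

theorem norm_apply_sub_starProjection_le (hK : (K : Set H) = {x | ∀ g, U g x = x})
    {T : H →L[ℂ] H} (hT : T ∈ unitaryConvexHull U) (x y : H) :
    ‖T y - K.starProjection x‖ ≤ ‖y - K.starProjection x‖ := by
  have hfix : T (K.starProjection x) = K.starProjection x :=
    apply_eq_self_of_forall_eq hT ((Set.ext_iff.1 hK _).1 (K.starProjection_apply_mem x))
  calc ‖T y - K.starProjection x‖ = ‖T (y - K.starProjection x)‖ := by rw [map_sub, hfix]
    _ ≤ ‖y - K.starProjection x‖ := norm_apply_le hT _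

theorem exists_mem_unitaryConvexHull_norm_sub_starProjection_lt [CompleteSpace H]
    (hK : (K : Set H) = {x | ∀ g, U g x = x}) (x : H) {ε : ℝ} (hε : 0 < ε) :
    ∃ T ∈ unitaryConvexHull U, ‖T x - K.starProjection x‖ < ε := by
  obtain ⟨v, hvC, hv⟩ := exists_forall_eq_mem_closure_convexHull_orbit (U := U) x
  have hvP : v = K.starProjection x := by
    rw [← starProjection_eq_of_mem_closure_convexHull_orbit hK hvC,
      K.starProjection_eq_self_iff.2 ((Set.ext_iff.1 hK v).2 hv)]
  rw [← image_apply_unitaryConvexHull] at hvC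
  obtain ⟨_, ⟨T, hT, rfl⟩, hdist⟩ := Metric.mem_closure_iff.1 hvC ε hε
  exact ⟨T, hT, by rwa [← hvP, ← dist_eq_norm, dist_comm]⟩

end UnitaryRepresentation

theorem orthogonalProjection_mem_strong_closure_convexHull
    {G : Type*} [Group G] {H : Type*} [NormedAddCommGroup H] [InnerProductSpace ℂ H]
    [CompleteSpace H]
    (U : G →* (H ≃ₗᵢ[ℂ] H)) (K : Submodule ℂ H) [K.HasOrthogonalProjection]
    (hK : (K : Set H) = {x : H | ∀ g, U g x = x}) :
    ∀ ε > 0, ∀ s : Finset H,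
      ∃ T ∈ convexHull ℝ
          (Set.range fun g => (U g).toLinearIsometry.toContinuousLinearMap),
        ∀ x ∈ s, ‖T x - (K.subtypeL.comp K.orthogonalProjectionOnto) x‖ < ε := by
  intro ε hε s
  change ∃ T ∈ unitaryConvexHull U, ∀ x ∈ s, ‖T x - K.starProjection x‖ < ε
  classical
  induction s using Finset.induction_on with
  | empty => exact ⟨1, one_mem_unitaryConvexHull U, by simp⟩
  | insert a s _ ih =>
    obtain ⟨T, hT, hTs⟩ := ih
    obtain ⟨T', hT', hT'a⟩ :=
      exists_mem_unitaryConvexHull_norm_sub_starProjection_lt hK (T a) hε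
    refine ⟨T' * T, mul_mem_unitaryConvexHull hT' hT, fun x hx => ?_⟩
    rcases Finset.mem_insert.1 hx with rfl | hxs
    · rwa [starProjection_apply_of_mem_unitaryConvexHull hK hT] at hT'a
    · exact (norm_apply_sub_starProjection_le hK hT' x (T x)).trans_lt (hTs x hxs)
end

section
/- Let (A, μ, α) be a W*-dynamical system with GNS triple (H_μ, π_μ, Ω_μ) and unitary representation U_g implementing α. Then the fixed point space H_μ^U = {x ∈ H_μ : U_g x = x for all g} equals the closure of {π_μ(a)Ω_μ : a ∈ A^α}, where A^α is the fixed point algebra of α. -/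
noncomputable section

open Filter Topology Metric Set RealInnerProductSpace ComplexConjugate

section AuxLemmas

variable {H : Type*} [NormedAddCommGroup H] [InnerProductSpace ℂ H] [CompleteSpace H]

/-- In a nonempty closed convex set invariant under a group of linear isometries,
the point nearest to a fixed vector `u` is itself fixed. -/
lemma exists_fixed_nearest {G : Type*} [Group G] (U : G →* (H ≃ₗᵢ[ℂ] H))
    (D : Set H) (hne : D.Nonempty) (hcl : IsClosed D) (hconv : Convex ℝ D)
    (hinv : ∀ g, ∀ z ∈ D, (U g) z ∈ D) (u : H) (hu : ∀ g, (U g) u = u) :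
    ∃ d ∈ D, (∀ g, (U g) d = d) ∧ ‖u - d‖ = ⨅ w : D, ‖u - w‖ := by
  letI : InnerProductSpace ℝ H := InnerProductSpace.rclikeToReal ℂ H
  obtain ⟨d, hd, hmin⟩ :=
    exists_norm_eq_iInf_of_complete_convex hne hcl.isComplete hconv u
  refine ⟨d, hd, fun g => ?_, hmin⟩
  set w := (U g) d with hw
  have hwD : w ∈ D := hinv g d hd
  have h1 : ‖u - w‖ = ⨅ z : D, ‖u - z‖ := by
    have h0 : ‖u - w‖ = ‖u - d‖ := by
      conv_lhs => rw [← hu g]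
      rw [hw, ← map_sub, LinearIsometryEquiv.norm_map]
    rw [h0, hmin]
  have c1 := (norm_eq_iInf_iff_real_inner_le_zero hconv hd).1 hmin w hwD
  have c2 := (norm_eq_iInf_iff_real_inner_le_zero hconv hwD).1 h1 d hd
  have e1 : ⟪u - d, w - d⟫ + ⟪u - w, d - w⟫ = ‖w - d‖ ^ 2 := by
    have h5 : (u - d) - (u - w) = w - d := by abel
    have h6 := inner_sub_left (𝕜 := ℝ) (u - d) (u - w) (w - d)
    rw [h5, real_inner_self_eq_norm_sq] at h6
    have h4 : (⟪u - w, d - w⟫ : ℝ) = -⟪u - w, w - d⟫ := by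
      rw [← inner_neg_right, neg_sub]
    linarith
  have h2 : ‖w - d‖ = 0 := by nlinarith [add_nonpos c1 c2, norm_nonneg (w - d)]
  exact sub_eq_zero.mp (norm_eq_zero.mp h2)

local notation "⟪" x ", " y "⟫" => @inner ℂ _ _ x y

/-- A weak-operator-topology cluster point of a bounded sequence of operators,
extracted by hand via Tychonoff on matrix coefficients. -/
lemma exists_cluster_operator (T : Set (H →L[ℂ] H)) (r : ℝ) (hr : 0 ≤ r)
    (b : ℕ → H →L[ℂ] H) (hbnd : ∀ n, ‖b n‖ ≤ r)
    (hcomm : ∀ n, ∀ c ∈ T, ∀ z, c (b n z) = b n (c z))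
    {Ω y : H} (htend : Tendsto (fun n => b n Ω) atTop (nhds y)) :
    ∃ B : H →L[ℂ] H, (∀ c ∈ T, ∀ z, c (B z) = B (c z)) ∧ B Ω = y := by
  classical
  set Φ : (H →L[ℂ] H) → (H × H → ℂ) := fun A p => ⟪p.1, A p.2⟫ with hΦ
  set K : Set (H × H → ℂ) :=
    Set.pi Set.univ (fun p => Metric.closedBall (0 : ℂ) (r * ‖p.1‖ * ‖p.2‖)) with hK
  have hKc : IsCompact K := isCompact_univ_pi fun p => isCompact_closedBall _ _
  have hmemK : ∀ n, Φ (b n) ∈ K := by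
    intro n p _
    rw [Metric.mem_closedBall, dist_zero_right]
    calc ‖(⟪p.1, b n p.2⟫ : ℂ)‖ ≤ ‖p.1‖ * ‖b n p.2‖ := norm_inner_le_norm _ _
      _ ≤ ‖p.1‖ * (r * ‖p.2‖) := by
          refine mul_le_mul_of_nonneg_left ?_ (norm_nonneg _)
          calc ‖b n p.2‖ ≤ ‖b n‖ * ‖p.2‖ := (b n).le_opNorm p.2
            _ ≤ r * ‖p.2‖ := mul_le_mul_of_nonneg_right (hbnd n) (norm_nonneg _)
      _ = r * ‖p.1‖ * ‖p.2‖ := by ring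
  set F : Filter (H × H → ℂ) := Filter.map (fun n => Φ (b n)) Filter.atTop with hF
  have hFK : F ≤ Filter.principal K :=
    Filter.le_principal_iff.2 (Filter.mem_map.2 (Filter.Eventually.of_forall hmemK))
  haveI : F.NeBot := Filter.map_neBot
  obtain ⟨f, hfK, hcl⟩ := hKc.exists_clusterPt hFK
  -- membership principle for closed conditions
  have hprin : ∀ C : Set (H × H → ℂ), IsClosed C → (∀ n, Φ (b n) ∈ C) → f ∈ C := by
    intro C hC hcn
    have h1 : ClusterPt f (Filter.principal C) :=
      hcl.mono (Filter.le_principal_iff.2 (Filter.mem_map.2 (Filter.Eventually.of_forall hcn)))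
    rw [← hC.closure_eq]
    exact mem_closure_iff_clusterPt.2 h1
  have hadd2 : ∀ x z1 z2, f (x, z1 + z2) = f (x, z1) + f (x, z2) := fun x z1 z2 =>
    hprin {φ | φ (x, z1 + z2) = φ (x, z1) + φ (x, z2)}
      (isClosed_eq (continuous_apply _) ((continuous_apply (x, z1)).add (continuous_apply (x, z2))))
      (fun n => by simp [hΦ, inner_add_right])
  have hsmul2 : ∀ (c : ℂ) x z, f (x, c • z) = c * f (x, z) := fun c x z =>
    hprin {φ | φ (x, c • z) = c * φ (x, z)}
      (isClosed_eq (continuous_apply _) (continuous_const.mul (continuous_apply _)))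
      (fun n => by simp [hΦ, inner_smul_right])
  have hadd1 : ∀ x1 x2 z, f (x1 + x2, z) = f (x1, z) + f (x2, z) := fun x1 x2 z =>
    hprin {φ | φ (x1 + x2, z) = φ (x1, z) + φ (x2, z)}
      (isClosed_eq (continuous_apply _) ((continuous_apply (x1, z)).add (continuous_apply (x2, z))))
      (fun n => by simp [hΦ, inner_add_left])
  have hsmul1 : ∀ (c : ℂ) x z, f (c • x, z) = conj c * f (x, z) := fun c x z =>
    hprin {φ | φ (c • x, z) = conj c * φ (x, z)}
      (isClosed_eq (continuous_apply _) (continuous_const.mul (continuous_apply _)))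
      (fun n => by simp [hΦ, inner_smul_left, mul_comm])
  have hcommf : ∀ c ∈ T, ∀ x z,
      f (x, c z) = f ((ContinuousLinearMap.adjoint c) x, z) := fun c hc x z =>
    hprin {φ | φ (x, c z) = φ ((ContinuousLinearMap.adjoint c) x, z)}
      (isClosed_eq (continuous_apply _) (continuous_apply _))
      (fun n => by
        show (⟪x, b n (c z)⟫ : ℂ) = ⟪(ContinuousLinearMap.adjoint c) x, b n z⟫
        rw [← hcomm n c hc z, ContinuousLinearMap.adjoint_inner_left])
  have hbound : ∀ p : H × H, ‖f p‖ ≤ r * ‖p.1‖ * ‖p.2‖ := by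
    intro p
    have := hfK p (Set.mem_univ p)
    rwa [Metric.mem_closedBall, dist_zero_right] at this
  have hΩval : ∀ x, f (x, Ω) = ⟪x, y⟫ := by
    intro x
    have hconv : Tendsto (fun n => Φ (b n) (x, Ω)) atTop (nhds (⟪x, y⟫ : ℂ)) :=
      Filter.Tendsto.inner tendsto_const_nhds htend
    have h2 : ClusterPt (f (x, Ω)) (Filter.map (fun φ : H × H → ℂ => φ (x, Ω)) F) :=
      hcl.map (continuous_apply (x, Ω)).continuousAt Filter.tendsto_map
    rw [hF, Filter.map_map] at h2
    have h3 : ClusterPt (f (x, Ω)) (nhds (⟪x, y⟫ : ℂ)) := h2.mono hconv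
    exact eq_of_nhds_neBot h3
  -- construct the operator from the sesquilinear form f
  have hvec : ∀ z : H, ∃ v : H, ∀ x, f (x, z) = ⟪x, v⟫ := by
    intro z
    let L : H →ₗ[ℂ] ℂ :=
      { toFun := fun x => conj (f (x, z))
        map_add' := fun x1 x2 => by simp [hadd1 x1 x2 z]
        map_smul' := fun c x => by simp [hsmul1 c x z, mul_comm] }
    have hLb : ∀ x, ‖L x‖ ≤ (r * ‖z‖) * ‖x‖ := by
      intro x
      have := hbound (x, z)
      simp only [L, LinearMap.coe_mk, AddHom.coe_mk, RCLike.norm_conj]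
      calc ‖f (x, z)‖ ≤ r * ‖x‖ * ‖z‖ := this
        _ = (r * ‖z‖) * ‖x‖ := by ring
    let Lc : H →L[ℂ] ℂ := LinearMap.mkContinuous L (r * ‖z‖) hLb
    refine ⟨(InnerProductSpace.toDual ℂ H).symm Lc, fun x => ?_⟩
    have h1 : ⟪(InnerProductSpace.toDual ℂ H).symm Lc, x⟫ = Lc x :=
      InnerProductSpace.toDual_symm_apply
    have h2 : (Lc x : ℂ) = conj (f (x, z)) := rfl
    calc f (x, z) = conj (conj (f (x, z))) := by simp
      _ = conj (Lc x) := by rw [h2]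
      _ = conj (⟪(InnerProductSpace.toDual ℂ H).symm Lc, x⟫ : ℂ) := by rw [h1]
      _ = ⟪x, (InnerProductSpace.toDual ℂ H).symm Lc⟫ := by rw [inner_conj_symm]
  choose v hv using hvec
  have hvadd : ∀ z1 z2, v (z1 + z2) = v z1 + v z2 := by
    intro z1 z2
    refine ext_inner_left ℂ fun x => ?_
    rw [← hv, hadd2, hv, hv, inner_add_right]
  have hvsmul : ∀ (c : ℂ) z, v (c • z) = c • v z := by
    intro c z
    refine ext_inner_left ℂ fun x => ?_
    rw [← hv, hsmul2, hv, inner_smul_right]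
  have hvbnd : ∀ z, ‖v z‖ ≤ r * ‖z‖ := by
    intro z
    rcases eq_or_lt_of_le (norm_nonneg (v z)) with h0 | h0
    · rw [← h0]; positivity
    · have h1 : (⟪v z, v z⟫ : ℂ) = f (v z, z) := (hv z (v z)).symm
      have h2 : ‖(⟪v z, v z⟫ : ℂ)‖ = ‖v z‖ * ‖v z‖ := by
        rw [inner_self_eq_norm_sq_to_K]
        simp [sq]
      have h3 : ‖v z‖ * ‖v z‖ ≤ (r * ‖z‖) * ‖v z‖ := by
        rw [← h2, h1]
        calc ‖f (v z, z)‖ ≤ r * ‖v z‖ * ‖z‖ := hbound (v z, z)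
          _ = (r * ‖z‖) * ‖v z‖ := by ring
      exact le_of_mul_le_mul_right h3 h0
  let B : H →L[ℂ] H := LinearMap.mkContinuous
    { toFun := v, map_add' := hvadd, map_smul' := hvsmul } r hvbnd
  have hB : ∀ x z, (⟪x, B z⟫ : ℂ) = f (x, z) := fun x z => (hv z x).symm
  refine ⟨B, fun c hc z => ?_, ?_⟩
  · refine ext_inner_left ℂ fun x => ?_
    calc (⟪x, c (B z)⟫ : ℂ) = ⟪(ContinuousLinearMap.adjoint c) x, B z⟫ :=
          (ContinuousLinearMap.adjoint_inner_left c (B z) x).symm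
      _ = f ((ContinuousLinearMap.adjoint c) x, z) := hB _ _
      _ = f (x, c z) := (hcommf c hc x z).symm
      _ = ⟪x, B (c z)⟫ := (hB _ _).symm
  · refine ext_inner_left ℂ fun x => ?_
    rw [hB, hΩval]


end AuxLemmas

/-- Conjugation of a bounded operator by a unitary (surjective linear isometry). -/
def conjAct {H : Type*} [NormedAddCommGroup H] [InnerProductSpace ℂ H]
    (u : H ≃ₗᵢ[ℂ] H) (a : H →L[ℂ] H) : H →L[ℂ] H :=
  u.toLinearIsometry.toContinuousLinearMap ∘L a ∘L
    u.symm.toLinearIsometry.toContinuousLinearMap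

section Aux2

variable {H : Type*} [NormedAddCommGroup H] [InnerProductSpace ℂ H] [CompleteSpace H]

lemma conjAct_apply (u : H ≃ₗᵢ[ℂ] H) (a : H →L[ℂ] H) (z : H) :
    conjAct u a z = u (a (u.symm z)) := rfl

lemma norm_conjAct_le (u : H ≃ₗᵢ[ℂ] H) (a : H →L[ℂ] H) : ‖conjAct u a‖ ≤ ‖a‖ := by
  refine ContinuousLinearMap.opNorm_le_bound _ (norm_nonneg a) fun z => ?_
  rw [conjAct_apply]
  calc ‖u (a (u.symm z))‖ = ‖a (u.symm z)‖ := u.norm_map _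
    _ ≤ ‖a‖ * ‖u.symm z‖ := a.le_opNorm _
    _ = ‖a‖ * ‖z‖ := by rw [u.symm.norm_map]

end Aux2

/- STATEMENT 11 (Kovács–Szűcs): for a W*-dynamical system in GNS form (M acting on
H_μ with cyclic separating unit vector Ω, the action implemented by unitaries U_g
fixing Ω), the fixed point space of U equals the closure of {aΩ : a ∈ M^α}. -/
theorem fixedPointSpace_eq_closure_fixedAlgebra_orbit
    {H : Type*} [NormedAddCommGroup H] [InnerProductSpace ℂ H] [CompleteSpace H]
    {G : Type*} [Group G]
    (M : VonNeumannAlgebra H) (Ω : H) (hΩ : ‖Ω‖ = 1)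
    (hcyc : Dense ((fun a : H →L[ℂ] H => a Ω) '' (M : Set (H →L[ℂ] H))))
    (hsep : ∀ a ∈ M, a Ω = 0 → a = 0)
    (U : G →* (H ≃ₗᵢ[ℂ] H)) (hUΩ : ∀ g, U g Ω = Ω)
    (hUM : ∀ g, conjAct (U g) '' (M : Set (H →L[ℂ] H)) = (M : Set (H →L[ℂ] H))) :
    {x : H | ∀ g, U g x = x}
      = closure ((fun a : H →L[ℂ] H => a Ω) ''
          {a : H →L[ℂ] H | a ∈ M ∧ ∀ g, conjAct (U g) a = a}) := by
  classical
  have hUΩ' : ∀ g, (U g).symm Ω = Ω := fun g => by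
    conv_lhs => rw [← hUΩ g]
    exact (U g).symm_apply_apply Ω
  have hconjΩ : ∀ (g : G) (a : H →L[ℂ] H), (conjAct (U g) a) Ω = (U g) (a Ω) := fun g a => by
    rw [conjAct_apply, hUΩ' g]
  apply Set.Subset.antisymm
  · -- hard direction: fixed vectors lie in the closure of the fixed-algebra orbit
    intro x hx
    rw [Metric.mem_closure_iff]
    intro ε hε
    obtain ⟨w, ⟨a, haM, rfl⟩, hwx⟩ :
        ∃ w ∈ (fun a : H →L[ℂ] H => a Ω) '' (M : Set (H →L[ℂ] H)), dist x w < ε :=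
      Metric.mem_closure_iff.1 (hcyc x) ε hε
    -- the ℝ-linear evaluation map at Ω
    set ev : (H →L[ℂ] H) →ₗ[ℝ] H :=
      { toFun := fun a' => a' Ω
        map_add' := fun a' b' => rfl
        map_smul' := fun r a' => rfl } with hev
    set R : Set (H →L[ℂ] H) := Set.range (fun g => conjAct (U g) a) with hR
    set S : Set (H →L[ℂ] H) := convexHull ℝ R with hS
    set C : Set H := closure (ev '' S) with hC
    set Q : Set H := Set.range (fun g => (U g) (a Ω)) with hQdef
    have hQ : ev '' S = convexHull ℝ Q := by
      rw [hS, ev.image_convexHull, hR, hQdef, ← Set.range_comp]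
      congr 1
      ext z
      constructor
      · rintro ⟨g, rfl⟩; exact ⟨g, (hconjΩ g a).symm⟩
      · rintro ⟨g, rfl⟩; exact ⟨g, hconjΩ g a⟩
    have haΩC : a Ω ∈ C := by
      refine subset_closure ?_
      rw [hQ]
      refine subset_convexHull ℝ _ ⟨1, ?_⟩
      show (U (1 : G)) (a Ω) = a Ω
      rw [map_one]
      rfl
    have hCcl : IsClosed C := isClosed_closure
    have hCconv : Convex ℝ C := ((convex_convexHull ℝ _).is_linear_image ev.isLinear).closure
    have hCinv : ∀ g, ∀ z ∈ C, (U g) z ∈ C := by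
      intro g z hz
      rw [hC, hQ] at hz ⊢
      set Lg : H →ₗ[ℝ] H :=
        (((U g).toLinearEquiv : H ≃ₗ[ℂ] H) : H →ₗ[ℂ] H).restrictScalars ℝ with hLg
      have hLgc : Continuous Lg := (U g).continuous
      have h1 : (U g) z ∈ Lg '' (closure (convexHull ℝ Q)) := ⟨z, hz, rfl⟩
      have h2 : Lg '' (closure (convexHull ℝ Q)) ⊆ closure (Lg '' (convexHull ℝ Q)) :=
        image_closure_subset_closure_image hLgc
      have h3 : Lg '' (convexHull ℝ Q) = convexHull ℝ (Lg '' Q) := Lg.image_convexHull Q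
      have h4 : Lg '' Q ⊆ Q := by
        rintro _ ⟨_, ⟨h, rfl⟩, rfl⟩
        refine ⟨g * h, ?_⟩
        show (U (g * h)) (a Ω) = Lg ((U h) (a Ω))
        rw [map_mul]
        rfl
      have h5 : closure (Lg '' (convexHull ℝ Q)) ⊆ closure (convexHull ℝ Q) := by
        rw [h3]
        exact closure_mono (convexHull_mono h4)
      exact h5 (h2 h1)
    obtain ⟨d, hdC, hdfix, hdmin⟩ :=
      exists_fixed_nearest U C ⟨a Ω, haΩC⟩ hCcl hCconv hCinv x hx
    have hdist : ‖x - d‖ ≤ ‖x - a Ω‖ := by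
      rw [hdmin]
      exact ciInf_le ⟨0, fun _ ⟨w', hw'⟩ => hw' ▸ norm_nonneg _⟩ (⟨a Ω, haΩC⟩ : C)
    -- a sequence in ev '' S converging to d
    obtain ⟨useq, huS, hulim⟩ := mem_closure_iff_seq_limit.1 hdC
    choose b hbS hbev using huS
    have htend : Tendsto (fun n => b n Ω) atTop (nhds d) := by
      have : (fun n => b n Ω) = useq := funext fun n => hbev n
      rw [this]
      exact hulim
    -- S is contained in M and bounded by ‖a‖
    have hMconv : Convex ℝ (M : Set (H →L[ℂ] H)) :=
      ((Subalgebra.toSubmodule M.toStarSubalgebra.toSubalgebra).restrictScalars ℝ).convex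
    have hRM : R ⊆ (M : Set (H →L[ℂ] H)) := by
      rintro _ ⟨g, rfl⟩
      rw [← hUM g]
      exact ⟨a, haM, rfl⟩
    have hSM : S ⊆ (M : Set (H →L[ℂ] H)) := convexHull_min hRM hMconv
    have hSb : S ⊆ Metric.closedBall (0 : H →L[ℂ] H) ‖a‖ := by
      refine convexHull_min ?_ (convex_closedBall _ _)
      rintro _ ⟨g, rfl⟩
      rw [Metric.mem_closedBall, dist_zero_right]
      exact norm_conjAct_le _ _
    have hbnd : ∀ n, ‖b n‖ ≤ ‖a‖ := fun n => by
      have := hSb (hbS n)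
      rwa [Metric.mem_closedBall, dist_zero_right] at this
    have hcomm : ∀ n, ∀ c ∈ Set.centralizer (M : Set (H →L[ℂ] H)), ∀ z, c (b n z) = b n (c z) := by
      intro n c hc z
      have h1 : (b n) * c = c * (b n) := hc (b n) (hSM (hbS n))
      have h2 := congrFun (congrArg (DFunLike.coe) h1) z
      simpa [ContinuousLinearMap.mul_apply] using h2.symm
    obtain ⟨B, hBcomm, hBΩ⟩ :=
      exists_cluster_operator (Set.centralizer (M : Set (H →L[ℂ] H))) ‖a‖ (norm_nonneg a)
        b hbnd hcomm htend
    have hBM : B ∈ M := by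
      rw [← SetLike.mem_coe, ← M.centralizer_centralizer]
      intro c hc
      ext z
      simp only [ContinuousLinearMap.mul_apply]
      exact hBcomm c hc z
    have hBfix : ∀ g, conjAct (U g) B = B := by
      intro g
      have h1 : conjAct (U g) B ∈ (M : Set (H →L[ℂ] H)) := by
        rw [← hUM g]; exact ⟨B, hBM, rfl⟩
      have h2 : (conjAct (U g) B - B) Ω = 0 := by
        rw [ContinuousLinearMap.sub_apply, hconjΩ, hBΩ, hdfix g, sub_self]
      have h3 : conjAct (U g) B - B ∈ M := sub_mem h1 hBM
      have h4 := hsep _ h3 h2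
      rwa [sub_eq_zero] at h4
    refine ⟨B Ω, ⟨B, ⟨hBM, hBfix⟩, rfl⟩, ?_⟩
    show dist x (B Ω) < ε
    rw [hBΩ, dist_eq_norm]
    calc ‖x - d‖ ≤ ‖x - a Ω‖ := hdist
      _ < ε := by rwa [← dist_eq_norm]
  · -- easy direction
    have hclosed : IsClosed {x : H | ∀ g, U g x = x} := by
      have heq : {x : H | ∀ g, U g x = x} = ⋂ g, {x : H | U g x = x} := by
        ext z; simp [Set.mem_iInter]
      rw [heq]
      exact isClosed_iInter fun g => isClosed_eq (U g).continuous continuous_id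
    refine closure_minimal ?_ hclosed
    rintro _ ⟨a, ⟨haM, hfa⟩, rfl⟩ g
    have h := hconjΩ g a
    rw [hfa g] at h
    exact h.symm
end
end

section
/- Let M ⊆ B(H) be a von Neumann algebra with cyclic and separating unit vector Ω, U : G → U(H) a unitary representation with U_g Ω = Ω and U_g M U_g* = M for all g, and let χ : G → 𝕋 be a group homomorphism into the circle. Then M_χ Ω is dense in H_χ, where M_χ = {a ∈ M : U_g a U_g* = χ(g)a for all g} and H_χ = {x ∈ H : U_g x = χ(g)x for all g}. -/
noncomputable section

/-!
Let `x ∈ H_χ` and let `a ∈ M` with `a Ω` close to `x`. The twisted unitaries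
`v ↦ χ(g)⁻¹ U_g v` fix `x` and preserve the convex set `{b Ω | b ∈ M, ‖b‖ ≤ ‖a‖}`. This set is
closed: if `b_n ∈ M` are bounded and `b_n Ω` converges, then `b_n` converges strongly, because
`b_n c Ω = c b_n Ω` for `c ∈ M'` and `M' Ω` is dense (`Ω` separates `M`). So the point `B Ω` of
this set nearest to `x` exists and is unique, hence fixed by the twisted unitaries: it lies in
`H_χ` and is no farther from `x` than `a Ω`. Since `Ω` is separating, `U_g B U_g* = χ(g) B`.
-/

open Filter Topology Set Metric

section NearestPoint

variable {F : Type*} [NormedAddCommGroup F] [InnerProductSpace ℝ F]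

open RealInnerProductSpace in
theorem Convex.eq_of_norm_sub_eq_iInf {K : Set F} (hK : Convex ℝ K) {x y₁ y₂ : F}
    (h₁ : y₁ ∈ K) (h₂ : y₂ ∈ K) (m₁ : ‖x - y₁‖ = ⨅ w : K, ‖x - w‖)
    (m₂ : ‖x - y₂‖ = ⨅ w : K, ‖x - w‖) : y₁ = y₂ := by
  have c₁ := (norm_eq_iInf_iff_real_inner_le_zero hK h₁).mp m₁ y₂ h₂
  have c₂ := (norm_eq_iInf_iff_real_inner_le_zero hK h₂).mp m₂ y₁ h₁
  have hsum : ⟪y₂ - y₁, y₂ - y₁⟫ = ⟪x - y₁, y₂ - y₁⟫ + ⟪x - y₂, y₁ - y₂⟫ := by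
    simp only [inner_sub_left, inner_sub_right]
    ring
  exact (sub_eq_zero.mp (real_inner_self_nonpos.mp (by linarith))).symm

-- The nearest point of `K` to `x` is unique, and each `T i` carries it to a nearest point.
theorem Convex.exists_isFixedPt_nearest {ι : Type*} {K : Set F} (hconv : Convex ℝ K)
    (hne : K.Nonempty) (hK : IsComplete K) {T : ι → F → F} (hT : ∀ i, Isometry (T i))
    (hTK : ∀ i, MapsTo (T i) K K) {x : F} (hx : ∀ i, Function.IsFixedPt (T i) x) :
    ∃ y ∈ K, (∀ i, Function.IsFixedPt (T i) y) ∧ ∀ z ∈ K, ‖x - y‖ ≤ ‖x - z‖ := by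
  obtain ⟨y, hyK, hy⟩ := exists_norm_eq_iInf_of_complete_convex hne hK hconv x
  refine ⟨y, hyK, fun i => ?_, fun z hz => hy ▸ ?_⟩
  · refine (hconv.eq_of_norm_sub_eq_iInf hyK (hTK i hyK) hy ?_).symm
    rw [← hy, ← dist_eq_norm, ← dist_eq_norm]
    conv_lhs => rw [← (hx i).eq]
    exact (hT i).dist_eq x y
  · exact ciInf_le ⟨0, forall_mem_range.2 fun _ => norm_nonneg _⟩ (⟨z, hz⟩ : K)

end NearestPoint

theorem EquicontinuousAt.cauchySeq_of_mem_closure {ι X α : Type*} [Nonempty ι]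
    [SemilatticeSup ι] [TopologicalSpace X] [PseudoMetricSpace α] {F : ι → X → α} {s : Set X}
    {x : X} (hF : EquicontinuousAt F x) (hx : x ∈ closure s)
    (hs : ∀ y ∈ s, CauchySeq (F · y)) : CauchySeq (F · x) := by
  rw [Metric.cauchySeq_iff]
  intro ε hε
  obtain ⟨y, hyx, hys⟩ :=
    mem_closure_iff_nhds.mp hx _ (equicontinuousAt_iff_right.mp hF (ε / 3) (by positivity))
  obtain ⟨N, hN⟩ := Metric.cauchySeq_iff.mp (hs y hys) (ε / 3) (by positivity)
  refine ⟨N, fun m hm n hn => ?_⟩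
  calc dist (F m x) (F n x) ≤ dist (F m x) (F m y) + dist (F m y) (F n y) + dist (F n y) (F n x) :=
        dist_triangle4 _ _ _ _
    _ < ε / 3 + ε / 3 + ε / 3 := by
        gcongr
        · exact hyx m
        · exact hN m hm n hn
        · rw [dist_comm]; exact hyx n
    _ = ε := by ring

theorem ContinuousLinearMap.exists_mem_closedBall_tendsto_apply {𝕜 E F ι : Type*}
    [NontriviallyNormedField 𝕜] [NormedAddCommGroup E] [NormedSpace 𝕜 E] [NormedAddCommGroup F]
    [NormedSpace 𝕜 F] [CompleteSpace F] [Nonempty ι] [SemilatticeSup ι] {b : ι → E →L[𝕜] F}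
    {r : ℝ} (hb : ∀ n, b n ∈ closedBall 0 r) (hcau : ∀ x, CauchySeq (b · x)) :
    ∃ B ∈ closedBall (0 : E →L[𝕜] F) r, ∀ x, Tendsto (b · x) atTop (𝓝 (B x)) := by
  choose f hf using fun x => cauchySeq_tendsto_of_complete (hcau x)
  obtain ⟨B, hB, rfl⟩ := (isClosed_image_coe_closedBall 0 r).mem_of_tendsto
    (tendsto_pi_nhds.mpr hf) (Eventually.of_forall fun n => mem_image_of_mem _ (hb n))
  exact ⟨B, hB, hf⟩

namespace VonNeumannAlgebra

variable {H : Type*} [NormedAddCommGroup H] [InnerProductSpace ℂ H] [CompleteSpace H]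

theorem mem_of_tendsto_apply (M : VonNeumannAlgebra H) {ι : Type*} {l : Filter ι} [l.NeBot]
    {b : ι → H →L[ℂ] H} (hb : ∀ i, b i ∈ M) {B : H →L[ℂ] H}
    (hB : ∀ x, Tendsto (b · x) l (𝓝 (B x))) : B ∈ M := by
  rw [← SetLike.mem_coe, ← M.centralizer_centralizer, Set.mem_centralizer_iff]
  intro c hc
  ext x
  change c (B x) = B (c x)
  refine tendsto_nhds_unique ((c.continuous.tendsto _).comp (hB x)) ?_
  have hcomm : ∀ i, c (b i x) = b i (c x) := fun i =>
    congr($((Set.mem_centralizer_iff.mp hc) (b i) (hb i)) x).symm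
  simpa only [Function.comp_def, hcomm] using hB (c x)

theorem dense_commutant_apply_of_separating (M : VonNeumannAlgebra H) {Ω : H}
    (hsep : ∀ a ∈ M, a Ω = 0 → a = 0) :
    Dense ((fun c : H →L[ℂ] H => c Ω) '' (M.commutant : Set (H →L[ℂ] H))) := by
  set W : Submodule ℂ H := (Subalgebra.toSubmodule M.commutant.toStarSubalgebra.toSubalgebra).map
    (ContinuousLinearMap.apply ℂ H Ω : (H →L[ℂ] H) →ₗ[ℂ] H)
  have hW : (W : Set H) = (fun c : H →L[ℂ] H => c Ω) '' (M.commutant : Set (H →L[ℂ] H)) := rfl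
  rw [← hW, Submodule.dense_iff_topologicalClosure_eq_top]
  set P := W.topologicalClosure.starProjection
  have hPM : P ∈ M := by
    refine (IsStarProjection.mem_iff isStarProjection_starProjection M).mpr fun c hc => ?_
    have hcW : W.map (c : H →ₗ[ℂ] H) ≤ W := by
      rintro - ⟨-, ⟨d, hd, rfl⟩, rfl⟩
      exact ⟨c * d, show c * d ∈ M.commutant from mul_mem hc hd, rfl⟩
    rw [Submodule.range_starProjection, Module.End.mem_invtSubmodule,
      ← Submodule.map_le_iff_le_comap]
    exact (Submodule.topologicalClosure_map c W).trans (Submodule.topologicalClosure_mono hcW)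
  have hPΩ : P Ω = Ω := Submodule.starProjection_eq_self_iff.mpr
    (W.le_topologicalClosure ⟨1, one_mem M.commutant, rfl⟩)
  have hP : 1 - P = 0 := hsep _ (sub_mem (one_mem M) hPM) (by simp [hPΩ])
  rw [← Submodule.range_starProjection W.topologicalClosure]
  change (P : H →ₗ[ℂ] H).range = ⊤
  rw [← sub_eq_zero.mp hP]
  exact LinearMap.range_id

theorem isClosed_image_apply_inter_closedBall (M : VonNeumannAlgebra H) {Ω : H}
    (hsep : ∀ a ∈ M, a Ω = 0 → a = 0) (r : ℝ) :
    IsClosed ((fun b : H →L[ℂ] H => b Ω) '' ((M : Set (H →L[ℂ] H)) ∩ closedBall 0 r)) := by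
  refine isClosed_of_closure_subset fun y hy => ?_
  obtain ⟨v, hv, hvy⟩ := mem_closure_iff_seq_limit.mp hy
  choose b hb hbv using hv
  have hbΩ : Tendsto (b · Ω) atTop (𝓝 y) := by simpa only [hbv] using hvy
  have hequi : Equicontinuous ((↑) ∘ b) :=
    ((NormedSpace.equicontinuous_TFAE b).out 1 5).mpr
      (⟨r, fun n => mem_closedBall_zero_iff.mp (hb n).2⟩ : ∃ C, ∀ n, ‖b n‖ ≤ C)
  have hcau : ∀ x, CauchySeq (b · x) := by
    intro x
    refine (hequi x).cauchySeq_of_mem_closure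
      ((dense_commutant_apply_of_separating M hsep).closure_eq ▸ mem_univ x) ?_
    rintro - ⟨c, hc, rfl⟩
    have hcomm : ∀ n, b n (c Ω) = c (b n Ω) := fun n =>
      congr($(mem_commutant_iff.mp hc (b n) (hb n).1) Ω)
    simpa only [Function.comp_def, hcomm] using ((c.continuous.tendsto y).comp hbΩ).cauchySeq
  obtain ⟨B, hBr, hB⟩ :=
    ContinuousLinearMap.exists_mem_closedBall_tendsto_apply (fun n => (hb n).2) hcau
  exact ⟨B, ⟨M.mem_of_tendsto_apply (fun n => (hb n).1) hB, hBr⟩, tendsto_nhds_unique (hB Ω) hbΩ⟩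

end VonNeumannAlgebra

section ConjAct

variable {H : Type*} [NormedAddCommGroup H] [InnerProductSpace ℂ H]

theorem conjAct_apply_of_apply_eq_self {u : H ≃ₗᵢ[ℂ] H} {v : H} (hv : u v = v)
    (a : H →L[ℂ] H) : conjAct u a v = u (a v) := by
  simp [conjAct, u.symm_apply_eq.mpr hv.symm]

theorem norm_conjAct (u : H ≃ₗᵢ[ℂ] H) (a : H →L[ℂ] H) : ‖conjAct u a‖ = ‖a‖ := by
  rw [conjAct, LinearIsometry.norm_toContinuousLinearMap_comp]
  exact a.opNorm_comp_linearIsometryEquiv u.symm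

end ConjAct

section Eigenoperators

variable {H : Type*} [NormedAddCommGroup H] [InnerProductSpace ℂ H] [CompleteSpace H]
  {M : VonNeumannAlgebra H} {Ω : H}

theorem conjAct_eq_smul_of_apply_eq_smul (hsep : ∀ a ∈ M, a Ω = 0 → a = 0)
    {u : H ≃ₗᵢ[ℂ] H} (huΩ : u Ω = Ω) (huM : conjAct u '' (M : Set (H →L[ℂ] H)) ⊆ M)
    {c : ℂ} {B : H →L[ℂ] H} (hB : B ∈ M) (hBΩ : u (B Ω) = c • B Ω) : conjAct u B = c • B := by
  refine sub_eq_zero.mp (hsep _ (sub_mem (huM ⟨B, hB, rfl⟩) (M.toStarSubalgebra.smul_mem hB c)) ?_)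
  rw [sub_apply, conjAct_apply_of_apply_eq_self huΩ, hBΩ, smul_apply, sub_self]

theorem exists_eigenoperator_norm_sub_apply_le (hsep : ∀ a ∈ M, a Ω = 0 → a = 0) {ι : Type*}
    {U : ι → H ≃ₗᵢ[ℂ] H} (hUΩ : ∀ i, U i Ω = Ω)
    (hUM : ∀ i, conjAct (U i) '' (M : Set (H →L[ℂ] H)) ⊆ M) {χ : ι → ℂ} (hχ : ∀ i, ‖χ i‖ = 1)
    {x : H} (hx : ∀ i, U i x = χ i • x) {a : H →L[ℂ] H} (ha : a ∈ M) :
    ∃ B ∈ M, (∀ i, conjAct (U i) B = χ i • B) ∧ ‖x - B Ω‖ ≤ ‖x - a Ω‖ := by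
  let _ : InnerProductSpace ℝ H := InnerProductSpace.rclikeToReal ℂ H
  set K := (fun b : H →L[ℂ] H => b Ω) '' ((M : Set (H →L[ℂ] H)) ∩ closedBall 0 ‖a‖)
  have hK : Convex ℝ K :=
    (((Subalgebra.toSubmodule M.toStarSubalgebra.toSubalgebra).restrictScalars ℝ).convex.inter
      (convex_closedBall 0 ‖a‖)).linear_image
      ((ContinuousLinearMap.apply ℂ H Ω : (H →L[ℂ] H) →ₗ[ℂ] H).restrictScalars ℝ)
  have haK : a Ω ∈ K := ⟨a, ⟨ha, mem_closedBall_zero_iff.mpr le_rfl⟩, rfl⟩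
  have hχ0 : ∀ i, χ i ≠ 0 := fun i => norm_ne_zero_iff.mp (by simp [hχ])
  set T : ι → H → H := fun i v => (χ i)⁻¹ • U i v
  have hT : ∀ i, Isometry (T i) := fun i =>
    Isometry.of_dist_eq fun v w => by simp [T, dist_smul₀, hχ]
  have hTK : ∀ i, MapsTo (T i) K K := by
    rintro i - ⟨b, ⟨hbM, hbr⟩, rfl⟩
    refine ⟨(χ i)⁻¹ • conjAct (U i) b,
      ⟨M.toStarSubalgebra.smul_mem (hUM i ⟨b, hbM, rfl⟩) _, ?_⟩, ?_⟩
    · simpa [norm_smul, hχ, norm_conjAct] using hbr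
    · simp [T, conjAct_apply_of_apply_eq_self (hUΩ i)]
  have hTx : ∀ i, Function.IsFixedPt (T i) x := fun i => by
    simp [Function.IsFixedPt, T, hx, smul_smul, inv_mul_cancel₀ (hχ0 i)]
  obtain ⟨-, ⟨B, ⟨hBM, -⟩, rfl⟩, hBfix, hBnear⟩ := hK.exists_isFixedPt_nearest ⟨_, haK⟩
    (VonNeumannAlgebra.isClosed_image_apply_inter_closedBall M hsep ‖a‖).isComplete hT hTK hTx
  refine ⟨B, hBM, fun i => conjAct_eq_smul_of_apply_eq_smul hsep (hUΩ i) (hUM i) hBM ?_,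
    hBnear _ haK⟩
  exact (inv_smul_eq_iff₀ (hχ0 i)).mp (hBfix i)

end Eigenoperators

theorem eigenoperator_vectors_dense_in_eigenspace_general
    {H : Type*} [NormedAddCommGroup H] [InnerProductSpace ℂ H] [CompleteSpace H]
    {G : Type*} [Group G]
    (M : VonNeumannAlgebra H) (Ω : H)
    (hcyc : Dense ((fun a : H →L[ℂ] H => a Ω) '' (M : Set (H →L[ℂ] H))))
    (hsep : ∀ a ∈ M, a Ω = 0 → a = 0)
    (U : G →* (H ≃ₗᵢ[ℂ] H)) (hUΩ : ∀ g, U g Ω = Ω)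
    (hUM : ∀ g, conjAct (U g) '' (M : Set (H →L[ℂ] H)) = (M : Set (H →L[ℂ] H)))
    (χ : G → ℂ) (hχ1 : ∀ g, ‖χ g‖ = 1) :
    closure ((fun a : H →L[ℂ] H => a Ω) ''
        {a : H →L[ℂ] H | a ∈ M ∧ ∀ g, conjAct (U g) a = χ g • a})
      = {x : H | ∀ g, U g x = χ g • x} := by
  refine Subset.antisymm (closure_minimal ?_ ?_) fun x hx => Metric.mem_closure_iff.mpr ?_
  · rintro - ⟨a, ⟨-, ha⟩, rfl⟩ g
    rw [← conjAct_apply_of_apply_eq_self (hUΩ g), ha g, smul_apply]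
  · simp only [ofPred_forall]
    exact isClosed_iInter fun g => isClosed_eq (U g).continuous (continuous_const_smul (χ g))
  · intro ε hε
    obtain ⟨-, ⟨a, ha, rfl⟩, hxa⟩ := Metric.mem_closure_iff.mp (hcyc.closure_eq ▸ mem_univ x) ε hε
    obtain ⟨B, hBM, hB, hBx⟩ := exists_eigenoperator_norm_sub_apply_le hsep hUΩ
      (fun g => (hUM g).subset) hχ1 hx ha
    refine ⟨B Ω, ⟨B, ⟨hBM, hB⟩, rfl⟩, ?_⟩
    rw [dist_eq_norm] at hxa ⊢
    exact hBx.trans_lt hxa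

theorem eigenoperator_vectors_dense_in_eigenspace
    {H : Type*} [NormedAddCommGroup H] [InnerProductSpace ℂ H] [CompleteSpace H]
    {G : Type*} [Group G]
    (M : VonNeumannAlgebra H) (Ω : H) (hΩ : ‖Ω‖ = 1)
    (hcyc : Dense ((fun a : H →L[ℂ] H => a Ω) '' (M : Set (H →L[ℂ] H))))
    (hsep : ∀ a ∈ M, a Ω = 0 → a = 0)
    (U : G →* (H ≃ₗᵢ[ℂ] H)) (hUΩ : ∀ g, U g Ω = Ω)
    (hUM : ∀ g, conjAct (U g) '' (M : Set (H →L[ℂ] H)) = (M : Set (H →L[ℂ] H)))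
    (χ : G → ℂ) (hχ1 : ∀ g, ‖χ g‖ = 1) (hχm : ∀ g h : G, χ (g * h) = χ g * χ h) :
    closure ((fun a : H →L[ℂ] H => a Ω) ''
        {a : H →L[ℂ] H | a ∈ M ∧ ∀ g, conjAct (U g) a = χ g • a})
      = {x : H | ∀ g, U g x = χ g • x} :=
  eigenoperator_vectors_dense_in_eigenspace_general M Ω hcyc hsep U hUΩ hUM χ hχ1
end
end

section
/- Let T ⊆ B(H) be a weakly closed subspace, Ω ∈ H a unit vector with T'Ω dense in H (where T' is the commutant-type set of operators commuting with everything in T, or simply any set with this density property), and for each g in a group G let W_g be a linear isometry of H with W_g W_h = W_{gh} and with K_a := closure{W_g aΩ : g ∈ G} compact for every a ∈ T. Then the set Γ of linear contractions Θ : T → T with Θ(a)Ω ∈ K_a for all a ∈ T, topologized by pointwise strong convergence, is compact. -/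
/-
Embed `Γ` into `∏_{(a, x)} H` via `Θ ↦ ((a, x) ↦ Θ a x)`. If `b` commutes with `T`, then
`Θ a x - b (Θ a Ω) = Θ a (x - b Ω)`, so `Θ a x` lies within `‖a‖ ‖x - b Ω‖` of the compact set
`b K_a`; since such `b Ω` are dense, these constraints confine the coordinate `(a, x)` to a compact
set, and by Tychonoff it suffices that the image of `Γ` is closed. Linearity, the norm bounds and
`Θ a Ω ∈ K_a` pass to pointwise limits, and a pointwise limit of elements of the norm-bounded part
of `T` is a bounded operator lying in the weak-operator closure of `T`, which is `T`.
-/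

noncomputable section

local notation "⟪" x ", " y "⟫" => @inner ℂ _ _ x y

open Set Metric

theorem isCompact_biInter_cthickening {X ι : Type*} [PseudoMetricSpace X] [CompleteSpace X]
    {s : Set ι} {r : ι → ℝ} {L : ι → Set X} (hL : ∀ i ∈ s, IsCompact (L i))
    (hr : ∀ ε > 0, ∃ i ∈ s, r i < ε) : IsCompact (⋂ i ∈ s, cthickening (r i) (L i)) := by
  refine TotallyBounded.isCompact_of_isClosed ?_ (isClosed_biInter fun i _ => isClosed_cthickening)
  refine totallyBounded_iff.2 fun ε hε => ?_
  obtain ⟨i, hi, hri⟩ := hr (ε / 2) (half_pos hε)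
  obtain ⟨t, -, htf, hLt⟩ := (hL i hi).finite_cover_balls (half_pos hε)
  refine ⟨t, htf, ?_⟩
  rw [← thickening_eq_biUnion_ball] at hLt ⊢
  calc ⋂ i ∈ s, cthickening (r i) (L i) ⊆ cthickening (r i) (L i) := biInter_subset_of_mem hi
    _ ⊆ thickening (ε / 2) (L i) := cthickening_subset_thickening' (half_pos hε) hri _
    _ ⊆ thickening (ε / 2) (thickening (ε / 2) t) := thickening_subset_of_subset _ hLt
    _ ⊆ thickening ε t := (thickening_thickening_subset _ _ _).trans_eq (by rw [add_halves])

namespace ContinuousLinearMapWOT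

variable {𝕜 E F : Type*} [NormedField 𝕜] [AddCommGroup E] [TopologicalSpace E] [Module 𝕜 E]
  [AddCommGroup F] [TopologicalSpace F] [Module 𝕜 F] [IsTopologicalAddGroup F]
  [ContinuousConstSMul 𝕜 F]

theorem mem_of_coe_mem_closure_image_coe {T : Set (E →L[𝕜] F)}
    (hT : IsClosed ((ofCLM : (E →L[𝕜] F) → E →WOT[𝕜] F) '' T)) {f : E →L[𝕜] F}
    (hf : ⇑f ∈ closure (((⇑) : (E →L[𝕜] F) → E → F) '' T)) : f ∈ T := by
  have hweak : inducingFn _ E F (ofCLM f) ∈ closure (inducingFn _ E F '' (ofCLM '' T)) := by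
    refine map_mem_closure (f := fun (g : E → F) (p : E × StrongDual 𝕜 F) => p.2 (g p.1))
      (by fun_prop) hf ?_
    rintro _ ⟨S, hS, rfl⟩
    exact ⟨ofCLM S, mem_image_of_mem _ hS, rfl⟩
  rw [← mem_preimage, ← isInducing_inducingFn.closure_eq_preimage_closure_image,
    hT.closure_eq] at hweak
  obtain ⟨S, hS, hSf⟩ := hweak
  exact ofCLM_injective hSf ▸ hS

end ContinuousLinearMapWOT

section

variable {𝕜 E F : Type*} [NontriviallyNormedField 𝕜] [NormedAddCommGroup E] [NormedSpace 𝕜 E]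
  [NormedAddCommGroup F] [NormedSpace 𝕜 F]

theorem isClosed_image_coe_inter_closedBall {T : Set (E →L[𝕜] F)}
    (hT : IsClosed ((ContinuousLinearMapWOT.ofCLM : (E →L[𝕜] F) → E →WOT[𝕜] F) '' T)) (r : ℝ) :
    IsClosed (((⇑) : (E →L[𝕜] F) → E → F) '' (T ∩ closedBall 0 r)) :=
  ContinuousLinearMap.isClosed_image_coe_of_bounded_of_weak_closed
    (isBounded_closedBall.subset inter_subset_right) fun _ hf =>
      ⟨ContinuousLinearMapWOT.mem_of_coe_mem_closure_image_coe hT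
          (closure_mono (image_mono inter_subset_left) hf),
        ContinuousLinearMap.is_weak_closed_closedBall 0 r
          (closure_mono (image_mono inter_subset_right) hf)⟩

end

section

variable {𝕜 E : Type*} [NontriviallyNormedField 𝕜] [NormedAddCommGroup E] [NormedSpace 𝕜 E]

def constrainedContractions (T : Submodule 𝕜 (E →L[𝕜] E)) (Ω : E) (K : T → Set E) :
    Set (T × E → E) :=
  {F | ∃ Θ : T →ₗ[𝕜] T, (∀ a, ‖Θ a‖ ≤ ‖a‖) ∧ (∀ a, (Θ a : E →L[𝕜] E) Ω ∈ K a) ∧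
    ∀ a x, F (a, x) = (Θ a : E →L[𝕜] E) x}

theorem constrainedContractions_eq (T : Submodule 𝕜 (E →L[𝕜] E)) (Ω : E) (K : T → Set E) :
    constrainedContractions T Ω K =
      {F | ∀ a : T, (fun x => F (a, x)) ∈ (⇑) '' ((T : Set (E →L[𝕜] E)) ∩ closedBall 0 ‖a‖)} ∩
      {F | ∀ (a b : T) x, F (a + b, x) = F (a, x) + F (b, x)} ∩
      {F | ∀ (c : 𝕜) (a : T) x, F (c • a, x) = c • F (a, x)} ∩ {F | ∀ a, F (a, Ω) ∈ K a} := by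
  ext F
  constructor
  · rintro ⟨Θ, hΘ, hΘK, hΘF⟩
    obtain rfl : F = fun p => (Θ p.1 : E →L[𝕜] E) p.2 := funext fun p => hΘF p.1 p.2
    exact ⟨⟨⟨fun a => ⟨Θ a, ⟨(Θ a).2, mem_closedBall_zero_iff.2 (hΘ a)⟩, rfl⟩,
      fun a b x => by simp⟩, fun c a x => by simp⟩, hΘK⟩
  · rintro ⟨⟨⟨hT, hadd⟩, hsmul⟩, hK⟩
    choose S hST hSF using hT
    have hS : ∀ a x, S a x = F (a, x) := fun a x => congrFun (hSF a) x
    refine ⟨{ toFun a := ⟨S a, (hST a).1⟩, map_add' a b := ?_, map_smul' c a := ?_ },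
      fun a => by simpa using (hST a).2, fun a => by simpa [hS] using hK a,
      fun a x => (hS a x).symm⟩
    · ext x; simpa [hS] using hadd a b x
    · ext x; simpa [hS] using hsmul c a x

theorem isClosed_constrainedContractions {T : Submodule 𝕜 (E →L[𝕜] E)}
    (hT : IsClosed ((ContinuousLinearMapWOT.ofCLM : (E →L[𝕜] E) → E →WOT[𝕜] E) '' T)) (Ω : E)
    {K : T → Set E} (hK : ∀ a, IsClosed (K a)) : IsClosed (constrainedContractions T Ω K) := by
  simp only [constrainedContractions_eq, ofPred_forall]
  refine .inter (.inter (.inter ?_ ?_) ?_) ?_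
  · exact isClosed_iInter fun a => (isClosed_image_coe_inter_closedBall hT _).preimage (by fun_prop)
  · exact isClosed_iInter fun a => isClosed_iInter fun b => isClosed_iInter fun x =>
      isClosed_eq (by fun_prop) (by fun_prop)
  · exact isClosed_iInter fun c => isClosed_iInter fun a => isClosed_iInter fun x =>
      isClosed_eq (by fun_prop) (by fun_prop)
  · exact isClosed_iInter fun a => (hK a).preimage (continuous_apply _)

theorem ContinuousLinearMap.apply_mem_cthickening_image_of_commute {S b : E →L[𝕜] E}
    (hSb : Commute S b) {Ω : E} {K : Set E} (hS : S Ω ∈ K) (x : E) :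
    S x ∈ cthickening (‖S‖ * ‖x - b Ω‖) (b '' K) := by
  refine mem_cthickening_of_dist_le _ (b (S Ω)) _ _ (mem_image_of_mem b hS) ?_
  have hcomm : b (S Ω) = S (b Ω) := (DFunLike.congr_fun hSb.eq Ω).symm
  rw [dist_eq_norm, hcomm, ← map_sub]
  exact S.le_opNorm _

theorem constrainedContractions_subset_pi (T : Submodule 𝕜 (E →L[𝕜] E)) (Ω : E) (K : T → Set E) :
    constrainedContractions T Ω K ⊆ univ.pi fun p : T × E =>
      ⋂ b ∈ centralizer (T : Set (E →L[𝕜] E)), cthickening (‖p.1‖ * ‖p.2 - b Ω‖) (b '' K p.1) := by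
  rintro F ⟨Θ, hΘ, hΘK, hΘF⟩ ⟨a, x⟩ -
  refine mem_iInter₂.2 fun b hb => ?_
  rw [hΘF]
  exact cthickening_mono (by gcongr; exact hΘ a) _
    (ContinuousLinearMap.apply_mem_cthickening_image_of_commute (hb _ (Θ a).2) (hΘK a) x)

theorem isCompact_constrainedContractions [CompleteSpace E] {T : Submodule 𝕜 (E →L[𝕜] E)}
    (hT : IsClosed ((ContinuousLinearMapWOT.ofCLM : (E →L[𝕜] E) → E →WOT[𝕜] E) '' T)) {Ω : E}
    (hdense : Dense ((fun b : E →L[𝕜] E => b Ω) '' centralizer (T : Set (E →L[𝕜] E))))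
    {K : T → Set E} (hK : ∀ a, IsCompact (K a)) : IsCompact (constrainedContractions T Ω K) := by
  refine (isCompact_univ_pi fun p => ?_).of_isClosed_subset
    (isClosed_constrainedContractions hT Ω fun a => (hK a).isClosed)
    (constrainedContractions_subset_pi T Ω K)
  refine isCompact_biInter_cthickening (fun b _ => (hK p.1).image b.continuous) fun ε hε => ?_
  have hnear : IsOpen {y | ‖p.1‖ * ‖p.2 - y‖ < ε} := isOpen_lt (by fun_prop) continuous_const
  obtain ⟨_, ⟨b, hb, rfl⟩, hbε⟩ := hdense.exists_mem_open hnear ⟨p.2, by simpa using hε⟩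
  exact ⟨b, hb, hbε⟩

end

theorem contraction_semigroup_compact_general
    {H : Type*} [NormedAddCommGroup H] [InnerProductSpace ℂ H] [CompleteSpace H]
    {G : Type*}
    (T : Submodule ℂ (H →L[ℂ] H))
    (hTw : IsClosed ((ContinuousLinearMapWOT.ofCLM : (H →L[ℂ] H) → (H →WOT[ℂ] H)) '' (T : Set (H →L[ℂ] H))))
    (Ω : H)
    (hdense : Dense ((fun b : H →L[ℂ] H => b Ω) ''
      Set.centralizer (T : Set (H →L[ℂ] H))))
    (W : G → (H →ₗᵢ[ℂ] H))
    (hK : ∀ a : T, IsCompact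
      (closure (Set.range fun g => W g ((a : H →L[ℂ] H) Ω)))) :
    IsCompact {F : T × H → H | ∃ Θ : T →ₗ[ℂ] T,
      (∀ a : T, ‖Θ a‖ ≤ ‖a‖) ∧
      (∀ a : T, ((Θ a : H →L[ℂ] H) Ω) ∈
        closure (Set.range fun g => W g ((a : H →L[ℂ] H) Ω))) ∧
      (∀ (a : T) (x : H), F (a, x) = (Θ a : H →L[ℂ] H) x)} :=
  isCompact_constrainedContractions hTw hdense hK

theorem contraction_semigroup_compact
    {H : Type*} [NormedAddCommGroup H] [InnerProductSpace ℂ H] [CompleteSpace H]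
    {G : Type*} [Group G]
    (T : Submodule ℂ (H →L[ℂ] H))
    (hTw : IsClosed ((ContinuousLinearMapWOT.ofCLM : (H →L[ℂ] H) → (H →WOT[ℂ] H)) '' (T : Set (H →L[ℂ] H))))
    (Ω : H) (hΩ : ‖Ω‖ = 1)
    (hdense : Dense ((fun b : H →L[ℂ] H => b Ω) ''
      Set.centralizer (T : Set (H →L[ℂ] H))))
    (W : G → (H →ₗᵢ[ℂ] H)) (hW : ∀ g h : G, (W g).comp (W h) = W (g * h))
    (hK : ∀ a : T, IsCompact
      (closure (Set.range fun g => W g ((a : H →L[ℂ] H) Ω)))) :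
    IsCompact {F : T × H → H | ∃ Θ : T →ₗ[ℂ] T,
      (∀ a : T, ‖Θ a‖ ≤ ‖a‖) ∧
      (∀ a : T, ((Θ a : H →L[ℂ] H) Ω) ∈
        closure (Set.range fun g => W g ((a : H →L[ℂ] H) Ω))) ∧
      (∀ (a : T) (x : H), F (a, x) = (Θ a : H →L[ℂ] H) x)} :=
  contraction_semigroup_compact_general T hTw Ω hdense W hK
end
end
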